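/- Fix an integer k ≥ 1, a real z ≥ 1, and reals ζ₁, ζ₂ ≥ 1. There exist constants γ₁, γ₂ ≥ 1 depending only on z, ζ₁, ζ₂ such that for every instance of the constrained-clustering setup (with S, Q, Ψ, π_Q, n_b, n_a as in the setup), if n_b < n_a, then (1/γ₁) · r^z / Cost(X,S) ≤ r^z / (Ψ + n_b · r^z) ≤ 2^z · γ₂ · τ(x), where τ(x) is the (k,z)-medoids sensitivity of x with respect to X. (Note that dist(x,S) = r, so r^z / Cost(X,S) = Cost(x,S)/Cost(X,S).) -/

import Mathlib

/-!
Lower bound: `Ψ` is within `ζ₁ ζ₂` of `Cost(X,S)`, and every point whose `Q`-center lies within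
`r/2` of `x` is at distance `≥ r/4` from that center or from `S` (which keeps distance `r` from `x`),
so `n_b r^z ≤ 4^z (Cost(X,Q) + Cost(X,S)) ≤ 4^z (ζ₁ + 1) Cost(X,S)`.

Upper bound: the centers of `Q` farther than `r/2` from `x`, together with `p`, form a candidate
`C` for the sensitivity with `dist(x,C) ≥ r/2`. Points whose center is far keep it; the `n_b` others
are rerouted to `p` at an extra cost of at most `3r/2` each. Hence
`Cost(X,C) ≤ 3^z ζ₂ (Ψ + n_b r^z)`, and `τ(x) ≥ dist(x,C)^z / Cost(X,C)`.
-/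

open scoped BigOperators Classical

/-- `dSet x C` is the distance from the point `x` to the finite set `C`. -/
noncomputable def dSet {d : ℕ} (x : EuclideanSpace ℝ (Fin d))
    (C : Finset (EuclideanSpace ℝ (Fin d))) : ℝ :=
  sInf ((fun c => dist x c) '' (C : Set (EuclideanSpace ℝ (Fin d))))

/-- `kzCost z X C = Σ_{x ∈ X} dist(x,C)^z`. -/
noncomputable def kzCost {d : ℕ} (z : ℝ) (X C : Finset (EuclideanSpace ℝ (Fin d))) : ℝ :=
  ∑ x ∈ X, dSet x C ^ z

/-- The `(k,z)`-medoids sensitivity of `x` with respect to `X`. -/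
noncomputable def medoidSens {d : ℕ} (z : ℝ) (k : ℕ)
    (X : Finset (EuclideanSpace ℝ (Fin d))) (x : EuclideanSpace ℝ (Fin d)) : ℝ :=
  sSup {r : ℝ | ∃ C : Finset (EuclideanSpace ℝ (Fin d)),
    C ⊆ X ∧ C.Nonempty ∧ C.card ≤ k ∧ r = dSet x C ^ z / kzCost z X C}

theorem max_rpow_le_add_rpow {a b : ℝ} (z : ℝ) (ha : 0 ≤ a) (hb : 0 ≤ b) :
    max a b ^ z ≤ a ^ z + b ^ z := by
  rcases le_total a b with h | h
  · rw [max_eq_right h]; exact le_add_of_nonneg_left (Real.rpow_nonneg ha z)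
  · rw [max_eq_left h]; exact le_add_of_nonneg_right (Real.rpow_nonneg hb z)

theorem rpow_le_of_le_mul_add {a b c m z : ℝ} (ha : 0 ≤ a) (hb : 0 ≤ b) (hc : 0 ≤ c)
    (hm : 0 ≤ m) (hz : 0 ≤ z) (h : c ≤ m * (a + b)) :
    c ^ z ≤ (2 * m) ^ z * (a ^ z + b ^ z) := by
  have hmax : c ≤ 2 * m * max a b := by
    nlinarith [le_max_left a b, le_max_right a b]
  calc c ^ z ≤ (2 * m * max a b) ^ z := Real.rpow_le_rpow hc hmax hz
    _ = (2 * m) ^ z * max a b ^ z := Real.mul_rpow (by positivity) (le_max_of_le_left ha)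
    _ ≤ (2 * m) ^ z * (a ^ z + b ^ z) := by
      gcongr
      exact max_rpow_le_add_rpow z ha hb

section Clustering

variable {d : ℕ} {z : ℝ} {x y p : EuclideanSpace ℝ (Fin d)}
  {X C Q S : Finset (EuclideanSpace ℝ (Fin d))}

theorem dSet_nonneg (x : EuclideanSpace ℝ (Fin d)) (C : Finset (EuclideanSpace ℝ (Fin d))) :
    0 ≤ dSet x C :=
  Real.sInf_nonneg (by rintro r ⟨c, _, rfl⟩; exact dist_nonneg)

theorem dSet_le_dist (x : EuclideanSpace ℝ (Fin d)) {c : EuclideanSpace ℝ (Fin d)} (hc : c ∈ C) :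
    dSet x C ≤ dist x c :=
  csInf_le ⟨0, by rintro r ⟨c', _, rfl⟩; exact dist_nonneg⟩ ⟨c, hc, rfl⟩

theorem le_dSet {m : ℝ} (hC : C.Nonempty) (h : ∀ c ∈ C, m ≤ dist x c) : m ≤ dSet x C := by
  obtain ⟨c, hc⟩ := hC
  exact le_csInf ⟨dist x c, c, hc, rfl⟩ (by rintro r ⟨c, hc, rfl⟩; exact h c hc)

theorem exists_dSet_eq_dist (x : EuclideanSpace ℝ (Fin d)) (hC : C.Nonempty) :
    ∃ c ∈ C, dSet x C = dist x c := by
  obtain ⟨c, hc, hmin⟩ := C.exists_min_image (dist x) hC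
  exact ⟨c, hc, le_antisymm (dSet_le_dist x hc) (le_dSet hC hmin)⟩

theorem dSet_pos_of_notMem (hC : C.Nonempty) (hx : x ∉ C) : 0 < dSet x C := by
  obtain ⟨c, hc, hdist⟩ := exists_dSet_eq_dist x hC
  rw [hdist]
  exact dist_pos.mpr fun h => hx (h ▸ hc)

theorem rpow_dSet_le_kzCost (z : ℝ) (C : Finset (EuclideanSpace ℝ (Fin d))) (hx : x ∈ X) :
    dSet x C ^ z ≤ kzCost z X C :=
  Finset.single_le_sum (fun y _ => Real.rpow_nonneg (dSet_nonneg y C) z) hx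

theorem kzCost_pos (hC : C.Nonempty) (hXC : ¬X ⊆ C) : 0 < kzCost z X C := by
  obtain ⟨y, hyX, hyC⟩ := Finset.not_subset.mp hXC
  exact (Real.rpow_pos_of_pos (dSet_pos_of_notMem hC hyC) z).trans_le
    (rpow_dSet_le_kzCost z C hyX)

theorem div_kzCost_le_medoidSens {k : ℕ} (hx : x ∈ X) (hCX : C ⊆ X) (hC : C.Nonempty)
    (hCk : C.card ≤ k) : dSet x C ^ z / kzCost z X C ≤ medoidSens z k X x := by
  refine le_csSup ⟨1, ?_⟩ ⟨C, hCX, hC, hCk, rfl⟩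
  rintro t ⟨C', -, -, -, rfl⟩
  exact div_le_one_of_le₀ (rpow_dSet_le_kzCost z C' hx)
    (Finset.sum_nonneg fun y _ => Real.rpow_nonneg (dSet_nonneg y C') z)

theorem rpow_le_of_center_near (hz : 0 ≤ z) {r : ℝ} (hr : 0 ≤ r) (hS : S.Nonempty)
    (hSfar : ∀ s ∈ S, r ≤ dist s x) {q : EuclideanSpace ℝ (Fin d)} (hq : dist q x ≤ r / 2) :
    r ^ z ≤ 4 ^ z * (dist y q ^ z + dSet y S ^ z) := by
  have hyS : r / 2 - dist y q ≤ dSet y S := le_dSet hS fun s hs => by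
    linarith [hSfar s hs, dist_triangle4 s y q x, dist_comm y s]
  have h := rpow_le_of_le_mul_add dist_nonneg (dSet_nonneg y S) hr zero_le_two hz
    (by linarith : r ≤ 2 * (dist y q + dSet y S))
  rwa [show (2 : ℝ) * 2 = 4 by norm_num] at h

theorem card_near_mul_rpow_le (hz : 0 ≤ z) {r : ℝ} (hr : 0 ≤ r) (hS : S.Nonempty)
    (hSfar : ∀ s ∈ S, r ≤ dist s x) {π : EuclideanSpace ℝ (Fin d) → EuclideanSpace ℝ (Fin d)}
    (hπ : ∀ y ∈ X, dist y (π y) = dSet y Q) :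
    ((X.filter fun y => dist (π y) x ≤ r / 2).card : ℝ) * r ^ z ≤
      4 ^ z * (kzCost z X Q + kzCost z X S) := by
  have hpt : ∀ y ∈ X.filter fun y => dist (π y) x ≤ r / 2,
      r ^ z ≤ 4 ^ z * (dSet y Q ^ z + dSet y S ^ z) := by
    intro y hy
    rw [Finset.mem_filter] at hy
    rw [← hπ y hy.1]
    exact rpow_le_of_center_near hz hr hS hSfar hy.2
  calc ((X.filter fun y => dist (π y) x ≤ r / 2).card : ℝ) * r ^ z
      ≤ ∑ y ∈ X.filter fun y => dist (π y) x ≤ r / 2, 4 ^ z * (dSet y Q ^ z + dSet y S ^ z) := by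
        rw [← nsmul_eq_mul]; exact Finset.card_nsmul_le_sum _ _ _ hpt
    _ ≤ ∑ y ∈ X, 4 ^ z * (dSet y Q ^ z + dSet y S ^ z) :=
        Finset.sum_le_sum_of_subset_of_nonneg (Finset.filter_subset _ _) fun y _ _ => by
          have := Real.rpow_nonneg (dSet_nonneg y Q) z
          have := Real.rpow_nonneg (dSet_nonneg y S) z
          positivity
    _ = 4 ^ z * (kzCost z X Q + kzCost z X S) := by
        rw [← Finset.mul_sum, Finset.sum_add_distrib, kzCost, kzCost]

noncomputable def farCenters (Q : Finset (EuclideanSpace ℝ (Fin d)))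
    (x p : EuclideanSpace ℝ (Fin d)) : Finset (EuclideanSpace ℝ (Fin d)) :=
  insert p (Q.filter fun c => dist x p / 2 < dist c x)

theorem farCenters_subset (hpQ : p ∈ Q) : farCenters Q x p ⊆ Q :=
  Finset.insert_subset hpQ (Finset.filter_subset _ _)

theorem farCenters_nonempty : (farCenters Q x p).Nonempty :=
  Finset.insert_nonempty _ _

theorem half_dist_le_dSet_farCenters : dist x p / 2 ≤ dSet x (farCenters Q x p) := by
  refine le_dSet farCenters_nonempty fun c hc => ?_
  rcases Finset.mem_insert.mp hc with rfl | hc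
  · linarith [dist_nonneg (x := x) (y := c)]
  · rw [dist_comm x c]; exact (Finset.mem_filter.mp hc).2.le

theorem rpow_dSet_le_of_center_near (hz : 0 ≤ z) (hpC : p ∈ C) {q : EuclideanSpace ℝ (Fin d)}
    (hq : dist q x ≤ dist x p / 2) :
    dSet y C ^ z ≤ 3 ^ z * (dist y q ^ z + dist x p ^ z) := by
  have hdetour : dSet y C ≤ 3 / 2 * (dist y q + dist x p) := by
    linarith [dSet_le_dist y hpC, dist_triangle4 y q x p, dist_nonneg (x := y) (y := q)]
  have h := rpow_le_of_le_mul_add dist_nonneg dist_nonneg (dSet_nonneg y C) (by norm_num) hz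
    hdetour
  rwa [show (2 : ℝ) * (3 / 2) = 3 by norm_num] at h

theorem kzCost_farCenters_le (hz : 0 ≤ z) {π : EuclideanSpace ℝ (Fin d) → EuclideanSpace ℝ (Fin d)}
    (hπ : ∀ y ∈ X, π y ∈ Q ∧ dist y (π y) = dSet y Q) :
    kzCost z X (farCenters Q x p) ≤
      3 ^ z * (kzCost z X Q +
        ((X.filter fun y => dist (π y) x ≤ dist x p / 2).card : ℝ) * dist x p ^ z) := by
  have h3 : (1 : ℝ) ≤ 3 ^ z := Real.one_le_rpow (by norm_num) hz
  have hpt : ∀ y ∈ X, dSet y (farCenters Q x p) ^ z ≤ 3 ^ z * dSet y Q ^ z +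
      if dist (π y) x ≤ dist x p / 2 then 3 ^ z * dist x p ^ z else 0 := by
    intro y hy
    obtain ⟨hπQ, hπd⟩ := hπ y hy
    split_ifs with hnear
    · rw [← hπd, ← mul_add]
      exact rpow_dSet_le_of_center_near hz (Finset.mem_insert_self _ _) hnear
    · have hπC : π y ∈ farCenters Q x p :=
        Finset.mem_insert_of_mem (Finset.mem_filter.mpr ⟨hπQ, not_le.mp hnear⟩)
      have hle : dSet y (farCenters Q x p) ^ z ≤ dSet y Q ^ z :=
        Real.rpow_le_rpow (dSet_nonneg _ _) (hπd ▸ dSet_le_dist y hπC) hz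
      rw [add_zero]
      exact hle.trans (le_mul_of_one_le_left (Real.rpow_nonneg (dSet_nonneg y Q) z) h3)
  calc kzCost z X (farCenters Q x p)
      ≤ ∑ y ∈ X, (3 ^ z * dSet y Q ^ z +
          if dist (π y) x ≤ dist x p / 2 then 3 ^ z * dist x p ^ z else 0) :=
        Finset.sum_le_sum hpt
    _ = _ := by
        rw [Finset.sum_add_distrib, ← Finset.mul_sum, ← Finset.sum_filter, Finset.sum_const,
          nsmul_eq_mul, kzCost]
        ring

theorem add_card_near_mul_rpow_le (hz : 0 ≤ z) {r ζ₁ ζ₂ Ψ : ℝ} (hr : 0 ≤ r) (hζ₂ : 0 ≤ ζ₂)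
    (hS : S.Nonempty) (hSfar : ∀ s ∈ S, r ≤ dist s x)
    {π : EuclideanSpace ℝ (Fin d) → EuclideanSpace ℝ (Fin d)}
    (hπ : ∀ y ∈ X, dist y (π y) = dSet y Q) (hQS : kzCost z X Q ≤ ζ₁ * kzCost z X S)
    (hΨ : Ψ ≤ ζ₂ * kzCost z X Q) :
    Ψ + ((X.filter fun y => dist (π y) x ≤ r / 2).card : ℝ) * r ^ z ≤
      (ζ₁ * ζ₂ + 4 ^ z * (ζ₁ + 1)) * kzCost z X S := by
  have hnear := card_near_mul_rpow_le hz hr hS hSfar hπ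
  nlinarith [mul_le_mul_of_nonneg_left hQS hζ₂,
    mul_le_mul_of_nonneg_left hQS (by positivity : (0 : ℝ) ≤ 4 ^ z)]

theorem kzCost_farCenters_le_mul (hz : 0 ≤ z) {ζ₂ Ψ : ℝ} (hζ₂ : 1 ≤ ζ₂)
    {π : EuclideanSpace ℝ (Fin d) → EuclideanSpace ℝ (Fin d)}
    (hπ : ∀ y ∈ X, π y ∈ Q ∧ dist y (π y) = dSet y Q) (hΨ : 1 / ζ₂ * kzCost z X Q ≤ Ψ) :
    kzCost z X (farCenters Q x p) ≤ 3 ^ z * ζ₂ *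
      (Ψ + ((X.filter fun y => dist (π y) x ≤ dist x p / 2).card : ℝ) * dist x p ^ z) := by
  have hQΨ : kzCost z X Q ≤ ζ₂ * Ψ := by
    rwa [one_div_mul_eq_div, div_le_iff₀' (by positivity)] at hΨ
  calc kzCost z X (farCenters Q x p)
      ≤ 3 ^ z * (kzCost z X Q +
          ((X.filter fun y => dist (π y) x ≤ dist x p / 2).card : ℝ) * dist x p ^ z) :=
        kzCost_farCenters_le hz hπ
    _ ≤ 3 ^ z * (ζ₂ * Ψ +
          ζ₂ * (((X.filter fun y => dist (π y) x ≤ dist x p / 2).card : ℝ) * dist x p ^ z)) := by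
        gcongr 3 ^ z * (?_ + ?_)
        exact le_mul_of_one_le_left (by positivity) hζ₂
    _ = _ := by ring

theorem rpow_div_le_medoidSens (hz : 0 ≤ z) {k : ℕ} (hr : 0 < dist x p) (hxX : x ∈ X)
    (hpQ : p ∈ Q) (hQX : Q ⊆ X) (hQk : Q.card ≤ k) {c D : ℝ} (hc : 0 < c) (hD : 0 < D)
    (hcost : kzCost z X (farCenters Q x p) ≤ c * D) :
    dist x p ^ z / D ≤ 2 ^ z * c * medoidSens z k X x := by
  have hCQ : farCenters Q x p ⊆ Q := farCenters_subset hpQ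
  have hxC : (dist x p / 2) ^ z ≤ dSet x (farCenters Q x p) ^ z :=
    Real.rpow_le_rpow (by positivity) half_dist_le_dSet_farCenters hz
  have hCpos : 0 < kzCost z X (farCenters Q x p) :=
    (Real.rpow_pos_of_pos (half_pos hr) z).trans_le (hxC.trans (rpow_dSet_le_kzCost z _ hxX))
  calc dist x p ^ z / D = 2 ^ z * c * ((dist x p / 2) ^ z / (c * D)) := by
        rw [Real.div_rpow hr.le (by norm_num)]
        field_simp
    _ ≤ 2 ^ z * c * (dSet x (farCenters Q x p) ^ z / kzCost z X (farCenters Q x p)) := by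
        gcongr
        exact Real.rpow_nonneg (dSet_nonneg _ _) z
    _ ≤ 2 ^ z * c * medoidSens z k X x := by
        gcongr
        exact div_kzCost_le_medoidSens hxX (hCQ.trans hQX) farCenters_nonempty
          ((Finset.card_le_card hCQ).trans hQk)

end Clustering

/-- If `n_b < n_a`, then `r^z / (Ψ + n_b·r^z)` still lower bounds (up to a constant)
the ratio `Cost(x,S)/Cost(X,S) = r^z/Cost(X,S)` and upper bounds, up to a
`2^z`-times-constant factor, the `(k,z)`-medoids sensitivity `τ(x)`. -/
theorem constrained_estimate_annulus
    (z ζ₁ ζ₂ : ℝ) (hz : 1 ≤ z) (hζ₁ : 1 ≤ ζ₁) (hζ₂ : 1 ≤ ζ₂) :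
    ∃ γ₁ γ₂ : ℝ, 1 ≤ γ₁ ∧ 1 ≤ γ₂ ∧
      ∀ (k d : ℕ), 1 ≤ k → 1 ≤ d →
        ∀ (X S Q : Finset (EuclideanSpace ℝ (Fin d))) (x p : EuclideanSpace ℝ (Fin d))
          (Ψ : ℝ) (π : EuclideanSpace ℝ (Fin d) → EuclideanSpace ℝ (Fin d)),
          k < X.card → x ∈ X → p ∈ X → 0 < dist x p →
          S ⊆ X → p ∈ S → S.card ≤ k → (∀ t ∈ S, dist x p ≤ dist t x) →
          (∀ T : Finset (EuclideanSpace ℝ (Fin d)), T ⊆ X → p ∈ T → T.card ≤ k →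
            (∀ t ∈ T, dist x p ≤ dist t x) → kzCost z X S ≤ kzCost z X T) →
          Q ⊆ X → p ∈ Q → Q.card ≤ k →
          (∀ T : Finset (EuclideanSpace ℝ (Fin d)), T ⊆ X → p ∈ T → T.card ≤ k →
            kzCost z X Q ≤ ζ₁ * kzCost z X T) →
          (1 / ζ₂) * kzCost z X Q ≤ Ψ → Ψ ≤ ζ₂ * kzCost z X Q →
          (∀ y ∈ X, π y ∈ Q ∧ dist y (π y) = dSet y Q) →
          (X.filter (fun y => dist (π y) x ≤ dist x p / 2)).card <
            (X.filter (fun y => dist x p / 2 < dist (π y) x ∧ dist (π y) x < dist x p)).card →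
          (1 / γ₁) * (dist x p ^ z / kzCost z X S) ≤
              dist x p ^ z / (Ψ + ((X.filter (fun y => dist (π y) x ≤ dist x p / 2)).card : ℝ)
                * dist x p ^ z) ∧
            dist x p ^ z / (Ψ + ((X.filter (fun y => dist (π y) x ≤ dist x p / 2)).card : ℝ)
                * dist x p ^ z) ≤ 2 ^ z * γ₂ * medoidSens z k X x := by
  have hz0 : 0 ≤ z := by linarith
  have h4 : 1 ≤ (4 : ℝ) ^ z := Real.one_le_rpow (by norm_num) hz0
  have h3 : 1 ≤ (3 : ℝ) ^ z := Real.one_le_rpow (by norm_num) hz0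
  refine ⟨ζ₁ * ζ₂ + 4 ^ z * (ζ₁ + 1), 3 ^ z * ζ₂, by nlinarith, by nlinarith, ?_⟩
  intro k d _ _ X S Q x p Ψ π hkX hxX _ hr hSX hpS hScard hSfar _ hQX hpQ hQcard hQopt hΨ_ge
    hΨ_le hπ _
  have hQpos : 0 < kzCost z X Q := kzCost_pos ⟨p, hpQ⟩ fun hXQ => by
    have := Finset.card_le_card hXQ; omega
  have hΨpos : 0 < Ψ := (by positivity : 0 < 1 / ζ₂ * kzCost z X Q).trans_le hΨ_ge
  have hrz : 0 < dist x p ^ z := Real.rpow_pos_of_pos hr z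
  have hD : 0 < Ψ + ((X.filter fun y => dist (π y) x ≤ dist x p / 2).card : ℝ) * dist x p ^ z := by
    positivity
  constructor
  · rw [div_mul_div_comm, one_mul]
    exact div_le_div_of_nonneg_left hrz.le hD <|
      add_card_near_mul_rpow_le hz0 hr.le (by positivity) ⟨p, hpS⟩ hSfar (fun y hy => (hπ y hy).2)
        (hQopt S hSX hpS hScard) hΨ_le
  · exact rpow_div_le_medoidSens hz0 hr hxX hpQ hQX hQcard (by positivity) hD
      (kzCost_farCenters_le_mul hz0 hζ₂ hπ hΨ_ge)
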